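/- (Mehler–Heine formula, case q(G) = G.) Assume none of α_1,…,α_d is a negative integer, and define Q_n(x) = Σ_{j=0}^n [(−n)_j / (∏_{k=1}^d (α_k+1)_j · j!)] · (−x)^j (i.e., Q_n(x) = 1Fd(−n; α_1+1,…,α_d+1; −x)). Then for every fixed x ∈ ℂ, lim_{n→∞} Q_n(x/n) = Σ_{j=0}^∞ x^j / (∏_{k=1}^d (α_k+1)_j · j!), i.e., Q_n(x/n) converges to the entire function 0Fd(—; α_1+1,…,α_d+1; x) as n → ∞ (the series on the right converging absolutely). -/

import Mathlib

/-!
Writing `t_j = x^j / (∏_k (α_k+1)_j · j!)`, the `j`-th term of `Q_n(x/n)` is `w_n(j) t_j` with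
`w_n(j) = ∏_{s<j} (1 - s/n) = (-n)_j (-1/n)^j`. These weights lie in `[0, 1]`, vanish for
`j > n` and tend to `1` as `n → ∞`, while `t_{j+1} = c_j t_j` with
`c_j = x / ((j+1) ∏_k (α_k+1+j)) → 0` makes `∑ ‖t_j‖` converge by the ratio test. Tannery's theorem (dominated convergence for
series) then gives `Q_n(x/n) → ∑ t_j`.
-/

open Polynomial

/-- Pochhammer symbol `(a)_j = a(a+1)⋯(a+j−1)`. -/
noncomputable def poch (a : ℂ) (j : ℕ) : ℂ := ∏ s ∈ Finset.range j, (a + s)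

open Filter Topology Finset

noncomputable def fallingRatio (n j : ℕ) : ℝ := ∏ s ∈ range j, (1 - (s : ℝ) / n)

lemma fallingRatio_eq_zero {n j : ℕ} (hn : n ≠ 0) (hnj : n < j) : fallingRatio n j = 0 :=
  prod_eq_zero (mem_range.2 hnj) (by simp [hn])

lemma abs_fallingRatio_le_one {n : ℕ} (hn : n ≠ 0) (j : ℕ) : |fallingRatio n j| ≤ 1 := by
  rcases le_or_gt j n with hjn | hnj
  · rw [fallingRatio, abs_prod]
    refine prod_le_one (fun _ _ => abs_nonneg _) fun s hs => ?_
    have hsn : (s : ℝ) ≤ n := by exact_mod_cast (mem_range.1 hs).le.trans hjn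
    have hn' : (0 : ℝ) < n := by positivity
    rw [abs_le]
    constructor
    · linarith [div_le_one_of_le₀ hsn hn'.le]
    · linarith [div_nonneg (Nat.cast_nonneg (α := ℝ) s) hn'.le]
  · simp [fallingRatio_eq_zero hn hnj]

lemma tendsto_fallingRatio (j : ℕ) : Tendsto (fallingRatio · j) atTop (𝓝 1) := by
  simpa [fallingRatio] using tendsto_finsetProd (range j) fun s _ =>
    (tendsto_const_div_atTop_nhds_zero_nat (s : ℝ)).const_sub 1

theorem tendsto_sum_range_fallingRatio_smul {E : Type*} [NormedAddCommGroup E]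
    [NormedSpace ℝ E] [CompleteSpace E] {f : ℕ → E} (hf : Summable (‖f ·‖)) :
    Tendsto (fun n => ∑ j ∈ range (n + 1), fallingRatio n j • f j) atTop (𝓝 (∑' j, f j)) := by
  have hlim : Tendsto (fun n => ∑' j, fallingRatio n j • f j) atTop (𝓝 (∑' j, f j)) := by
    refine tendsto_tsum_of_dominated_convergence hf
      (fun j => by simpa using (tendsto_fallingRatio j).smul_const (f j)) ?_
    filter_upwards [eventually_ne_atTop 0] with n hn j
    rw [norm_smul, Real.norm_eq_abs]
    exact mul_le_of_le_one_left (norm_nonneg _) (abs_fallingRatio_le_one hn j)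
  refine hlim.congr' ?_
  filter_upwards [eventually_ne_atTop 0] with n hn
  refine tsum_eq_sum fun j hj => ?_
  rw [fallingRatio_eq_zero hn (by simp at hj; omega), zero_smul]

theorem summable_norm_of_succ_eq_mul {R : Type*} [SeminormedRing R] {f c : ℕ → R}
    (hc : Tendsto c atTop (𝓝 0)) (hf : ∀ j, f (j + 1) = c j * f j) : Summable (‖f ·‖) := by
  refine summable_of_ratio_norm_eventually_le (r := 1 / 2) (by norm_num) ?_
  have hc' : Tendsto (‖c ·‖) atTop (𝓝 0) := by simpa using hc.norm
  filter_upwards [hc'.eventually (eventually_le_nhds one_half_pos)] with j hj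
  simp only [norm_norm, hf]
  exact (norm_mul_le _ _).trans (mul_le_mul_of_nonneg_right hj (norm_nonneg _))

lemma poch_succ (a : ℂ) (j : ℕ) : poch a (j + 1) = poch a j * (a + j) :=
  prod_range_succ _ _

lemma poch_neg_natCast_mul_pow {n : ℕ} (hn : n ≠ 0) (j : ℕ) :
    poch (-(n : ℂ)) j * (-(n : ℂ)⁻¹) ^ j = fallingRatio n j := by
  rw [poch, fallingRatio, pow_eq_prod_const, ← prod_mul_distrib]
  push_cast
  refine prod_congr rfl fun s _ => ?_
  field_simp
  ring

noncomputable def hyp0FdTerm (d : ℕ) (α : ℕ → ℂ) (x : ℂ) (j : ℕ) : ℂ :=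
  x ^ j / ((∏ k ∈ range d, poch (α k + 1) j) * (j.factorial : ℂ))

lemma hyp0FdTerm_succ (d : ℕ) (α : ℕ → ℂ) (x : ℂ) (j : ℕ) :
    hyp0FdTerm d α x (j + 1) =
      x * ((1 + (j : ℂ))⁻¹ * ∏ k ∈ range d, (α k + 1 + j)⁻¹) * hyp0FdTerm d α x j := by
  simp only [hyp0FdTerm, poch_succ, prod_mul_distrib, prod_inv_distrib, Nat.factorial_succ,
    Nat.cast_mul, Nat.cast_succ, div_eq_mul_inv, mul_inv, pow_succ]
  ring

lemma tendsto_hyp0FdTerm_ratio (d : ℕ) (α : ℕ → ℂ) (x : ℂ) :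
    Tendsto (fun j : ℕ => x * ((1 + (j : ℂ))⁻¹ * ∏ k ∈ range d, (α k + 1 + j)⁻¹))
      atTop (𝓝 0) := by
  have h (a : ℂ) : Tendsto (fun j : ℕ => (a + j)⁻¹) atTop (𝓝 0) :=
    tendsto_inv₀_cobounded.comp <|
      (tendsto_const_add_cobounded a).comp tendsto_natCast_atTop_cobounded
  simpa using tendsto_const_nhds.mul ((h 1).mul (tendsto_finsetProd _ fun k _ => h (α k + 1)))

theorem stmt18 (d : ℕ) (α : ℕ → ℂ) (x : ℂ) :
    Summable (fun j : ℕ =>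
      x ^ j / ((∏ k ∈ Finset.range d, poch (α k + 1) j) * (j.factorial : ℂ))) ∧
    Filter.Tendsto
      (fun n : ℕ => ∑ j ∈ Finset.range (n + 1),
        poch (-(n : ℂ)) j
          / ((∏ k ∈ Finset.range d, poch (α k + 1) j) * (j.factorial : ℂ))
          * (-(x / (n : ℂ))) ^ j)
      Filter.atTop
      (nhds (∑' j : ℕ,
        x ^ j / ((∏ k ∈ Finset.range d, poch (α k + 1) j) * (j.factorial : ℂ)))) := by
  have hsum : Summable (‖hyp0FdTerm d α x ·‖) :=
    summable_norm_of_succ_eq_mul (tendsto_hyp0FdTerm_ratio d α x) (hyp0FdTerm_succ d α x)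
  refine ⟨hsum.of_norm, (tendsto_sum_range_fallingRatio_smul hsum).congr' ?_⟩
  filter_upwards [eventually_ne_atTop 0] with n hn
  refine sum_congr rfl fun j _ => ?_
  rw [Complex.real_smul, ← poch_neg_natCast_mul_pow hn, hyp0FdTerm]
  ring
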